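/- arXiv:1110.4539 — 2 statements merged into one kernel-verified Lean document; each statement's English description precedes it below -/
import Mathlib

section
/- Two Markov equivalent maximal ancestral graphs have the same skeleton. -/
/-- A loopless mixed graph with three kinds of edges: lines (undirected),
arrows (directed, `arrow i j` means `i → j`), and arcs (bidirected). -/
structure MixedGraph (V : Type*) where
  line : V → V → Prop
  arrow : V → V → Prop
  arc : V → V → Prop
  line_symm : ∀ i j, line i j → line j i
  arc_symm : ∀ i j, arc i j → arc j i
  line_irrefl : ∀ i, ¬ line i i
  arrow_irrefl : ∀ i, ¬ arrow i i
  arc_irrefl : ∀ i, ¬ arc i i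

namespace MixedGraph

variable {V : Type*}

/-- `i` and `j` are adjacent (joined by some edge). -/
def adj (G : MixedGraph V) (i j : V) : Prop :=
  G.line i j ∨ G.arrow i j ∨ G.arrow j i ∨ G.arc i j

/-- There is an edge between `i` and `j` with an arrowhead pointing at `j`. -/
def headAt (G : MixedGraph V) (i j : V) : Prop :=
  G.arrow i j ∨ G.arc i j

/-- `j` is a collider on the V-configuration `⟨i, j, k⟩`. -/
def collider (G : MixedGraph V) (i j k : V) : Prop :=
  G.headAt i j ∧ G.headAt k j

/-- `i` is an ancestor of `j` (a direction-preserving path of arrows from `i` to `j`). -/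
def anc (G : MixedGraph V) (i j : V) : Prop :=
  Relation.ReflTransGen G.arrow i j

/-- A path: a list of pairwise distinct nodes, consecutive ones adjacent. -/
def isPath (G : MixedGraph V) (p : List V) : Prop :=
  p.Nodup ∧ List.Chain' G.adj p

/-- Inner-node condition for an `m`-connecting path given `C`:
every collider inner node is in `C` or an ancestor of a node of `C`,
every non-collider inner node is outside `C`. -/
def innerOK (G : MixedGraph V) (C : Set V) : List V → Prop
  | a :: b :: c :: rest =>
      ((G.collider a b c → b ∈ C ∨ ∃ x ∈ C, G.anc b x) ∧
        (¬ G.collider a b c → b ∉ C)) ∧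
      innerOK G C (b :: c :: rest)
  | _ => True

/-- `p` is an `m`-connecting path between `i` and `j` given `C`. -/
def mConnecting (G : MixedGraph V) (C : Set V) (i j : V) (p : List V) : Prop :=
  G.isPath p ∧ 2 ≤ p.length ∧ p.head? = some i ∧ p.getLast? = some j ∧
    G.innerOK C p

/-- `A` is `m`-separated from `B` given `C`. -/
def mSep (G : MixedGraph V) (A B C : Set V) : Prop :=
  ¬ ∃ (i j : V) (p : List V), i ∈ A ∧ j ∈ B ∧ G.mConnecting C i j p

/-- Two mixed graphs on the same node set are Markov equivalent if they induce
exactly the same `m`-separation statements among disjoint sets. -/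
def markovEquiv (G₁ G₂ : MixedGraph V) : Prop :=
  ∀ A B C : Set V, Disjoint A B → Disjoint A C → Disjoint B C →
    (G₁.mSep A B C ↔ G₂.mSep A B C)

/-- An undirected graph: only line edges. -/
def isUG (G : MixedGraph V) : Prop :=
  (∀ i j, ¬ G.arrow i j) ∧ (∀ i j, ¬ G.arc i j)

/-- A bidirected graph: only arc edges. -/
def isBG (G : MixedGraph V) : Prop :=
  (∀ i j, ¬ G.arrow i j) ∧ (∀ i j, ¬ G.line i j)

/-- A directed acyclic graph: only arrows, and no directed cycle. -/
def isDAG (G : MixedGraph V) : Prop :=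
  (∀ i j, ¬ G.line i j) ∧ (∀ i j, ¬ G.arc i j) ∧ ∀ i, ¬ Relation.TransGen G.arrow i i

/-- An ancestral graph: no node is an ancestor of one of its parents or spouses,
and no arrowhead points at a node having a neighbour. -/
def isAncestral (G : MixedGraph V) : Prop :=
  (∀ i j, (G.arrow j i ∨ G.arc j i) → ¬ G.anc i j) ∧
  (∀ i j k, G.line i j → ¬ G.headAt k i)

/-- Maximality: every pair of distinct non-adjacent nodes can be `m`-separated. -/
def isMaximal (G : MixedGraph V) : Prop :=
  ∀ i j, i ≠ j → ¬ G.adj i j → ∃ C : Set V, i ∉ C ∧ j ∉ C ∧ G.mSep {i} {j} C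

/-- A maximal ancestral graph. -/
def isMAG (G : MixedGraph V) : Prop :=
  G.isAncestral ∧ G.isMaximal

/-- Two graphs have the same skeleton. -/
def sameSkeleton (G₁ G₂ : MixedGraph V) : Prop :=
  ∀ i j, G₁.adj i j ↔ G₂.adj i j

/-- An unshielded collider V-configuration `⟨i, j, k⟩`. -/
def unshieldedCollider (G : MixedGraph V) (i j k : V) : Prop :=
  G.collider i j k ∧ i ≠ k ∧ ¬ G.adj i k

end MixedGraph

/-! Adjacent nodes are `m`-connected by their edge given any set, whereas in a maximal graph
non-adjacent nodes are `m`-separated by some set; Markov equivalence transfers that separation,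
so an edge of one graph cannot be missing from a Markov equivalent maximal graph. -/

namespace MixedGraph

variable {V : Type*} {G G' : MixedGraph V} {i j : V}

theorem ne_of_adj (hadj : G.adj i j) : i ≠ j := by
  rintro rfl
  rcases hadj with h | h | h | h
  exacts [G.line_irrefl i h, G.arrow_irrefl i h, G.arrow_irrefl i h, G.arc_irrefl i h]

theorem mConnecting_pair (hadj : G.adj i j) (C : Set V) : G.mConnecting C i j [i, j] :=
  ⟨⟨by simp [ne_of_adj hadj], List.isChain_pair.mpr hadj⟩, le_rfl, rfl, rfl, trivial⟩

theorem not_mSep_of_adj (hadj : G.adj i j) (C : Set V) : ¬ G.mSep {i} {j} C :=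
  fun hsep => hsep ⟨i, j, [i, j], rfl, rfl, mConnecting_pair hadj C⟩

theorem markovEquiv.symm (h : G.markovEquiv G') : G'.markovEquiv G :=
  fun A B C hAB hAC hBC => (h A B C hAB hAC hBC).symm

theorem markovEquiv.adj_of_isMaximal (h : G.markovEquiv G') (hmax : G'.isMaximal)
    (hadj : G.adj i j) : G'.adj i j := by
  have hne := ne_of_adj hadj
  by_contra hnadj
  obtain ⟨C, hiC, hjC, hsep⟩ := hmax i j hne hnadj
  refine not_mSep_of_adj hadj C ((h {i} {j} C ?_ ?_ ?_).mpr hsep)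
  all_goals rw [Set.disjoint_singleton_left]
  exacts [hne, hiC, hjC]

end MixedGraph

theorem mag_markovEquiv_sameSkeleton_general {V : Type*} (H₁ H₂ : MixedGraph V)
    (h₁ : H₁.isMAG) (h₂ : H₂.isMAG) (h : H₁.markovEquiv H₂) :
    H₁.sameSkeleton H₂ :=
  fun _ _ => ⟨h.adj_of_isMaximal h₂.2, h.symm.adj_of_isMaximal h₁.2⟩

/-- Two Markov equivalent maximal ancestral graphs have the same skeleton. -/
theorem mag_markovEquiv_sameSkeleton {V : Type*} [Fintype V] (H₁ H₂ : MixedGraph V)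
    (h₁ : H₁.isMAG) (h₂ : H₂.isMAG) (h : H₁.markovEquiv H₂) :
    H₁.sameSkeleton H₂ :=
  mag_markovEquiv_sameSkeleton_general H₁ H₂ h₁ h₂ h
end

section
/- A maximal ancestral graph H with no unshielded collider V-configuration is Markov equivalent to the undirected graph obtained from H by removing all arrowheads (i.e., replacing every edge by a line). -/
namespace MixedGraph
variable {V : Type*}

/-- The undirected graph obtained from `H` by removing all arrowheads,
i.e. replacing every edge by a line. -/
def toUG (H : MixedGraph V) : MixedGraph V where
  line := H.adj
  arrow _ _ := False
  arc _ _ := False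
  line_symm := fun i j h => by
    rcases h with h | h | h | h
    · exact Or.inl (H.line_symm i j h)
    · exact Or.inr (Or.inr (Or.inl h))
    · exact Or.inr (Or.inl h)
    · exact Or.inr (Or.inr (Or.inr (H.arc_symm i j h)))
  arc_symm := fun _ _ h => h.elim
  line_irrefl := fun i h => by
    rcases h with h | h | h | h
    · exact H.line_irrefl i h
    · exact H.arrow_irrefl i h
    · exact H.arrow_irrefl i h
    · exact H.arc_irrefl i h
  arrow_irrefl := fun _ h => h
  arc_irrefl := fun _ h => h

end MixedGraph


/-!
A shortest path of the skeleton between two nodes has no collider `⟨a, b, c⟩` of `H`: since `H`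
has no unshielded collider, `a` and `c` are adjacent and the edge `a — c` would shorten the path.
Its inner nodes avoid `C`, so it is `m`-connecting in `H` as well.

Conversely, every inner node in `C` of a shortest `m`-connecting path of `H` is a collider
`a *→ b ←* c` with `a` and `c` adjacent, and skipping `b` breaks `m`-connection only in the
configuration `w *→ a ↔ b ↔ c`, `a → c`, `a ∈ C` (or its mirror image). Such a configuration
at some position forces the same configuration one step earlier or its mirror image at the same
place. The latter is impossible in a MAG: `w` and `c` are adjacent by maximality, through an arc
`w ↔ c` by ancestrality, and then skipping both `a` and `b` would shorten the path.
-/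

namespace List
variable {α : Type*}

theorem getD_take_append_drop (p : List α) (d : α) {K L m : ℕ} (hKL : K < L)
    (hL : L ≤ p.length) :
    (p.take (K + 1) ++ p.drop L).getD m d =
      if m ≤ K then p.getD m d else p.getD (m - (K + 1) + L) d := by
  grind

theorem length_take_append_drop (p : List α) {K L : ℕ} (hKL : K < L) (hL : L ≤ p.length) :
    (p.take (K + 1) ++ p.drop L).length = p.length + (K + 1) - L := by
  grind

theorem take_append_drop_sublist (p : List α) {K L : ℕ} (h : K ≤ L) :
    p.take K ++ p.drop L <+ p := by
  simpa using (take_sublist_take_left (l := p) h).append_right (p.drop L)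

theorem getD_reverse_eq_getD (p : List α) (d : α) {m n : ℕ} (h : m + n + 1 = p.length) :
    p.reverse.getD m d = p.getD n d := by
  rw [getD_reverse m (by omega), show p.length - 1 - m = n by omega]

theorem isChain_iff_getD {R : α → α → Prop} (p : List α) (d : α) :
    p.IsChain R ↔ ∀ m, m + 1 < p.length → R (p.getD m d) (p.getD (m + 1) d) := by
  rw [isChain_iff_getElem]
  grind

theorem Nodup.getD_ne {p : List α} (hp : p.Nodup) (d : α) {m m' : ℕ} (hm : m < p.length)
    (hm' : m' < p.length) (h : m ≠ m') : p.getD m d ≠ p.getD m' d := by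
  rw [getD_eq_getElem _ _ hm, getD_eq_getElem _ _ hm']
  exact fun e => h (hp.getElem_inj_iff.1 e)

end List

namespace MixedGraph
variable {V : Type*} {G : MixedGraph V} {C : Set V}

theorem adj_symm {a b : V} (h : G.adj a b) : G.adj b a := by
  rcases h with h | h | h | h
  · exact Or.inl (G.line_symm _ _ h)
  · exact Or.inr (Or.inr (Or.inl h))
  · exact Or.inr (Or.inl h)
  · exact Or.inr (Or.inr (Or.inr (G.arc_symm _ _ h)))

theorem ne_of_adj_s5 {a b : V} (h : G.adj a b) : a ≠ b := by
  rintro rfl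
  rcases h with h | h | h | h
  exacts [G.line_irrefl a h, G.arrow_irrefl a h, G.arrow_irrefl a h, G.arc_irrefl a h]

theorem adj_of_arrow {a b : V} (h : G.arrow a b) : G.adj a b := Or.inr (Or.inl h)

theorem adj_of_arc {a b : V} (h : G.arc a b) : G.adj a b := Or.inr (Or.inr (Or.inr h))

theorem adj_of_collider (hnc : ¬ ∃ i j k, G.unshieldedCollider i j k) {a b c : V}
    (hcol : G.collider a b c) (hac : a ≠ c) : G.adj a c :=
  by_contra fun h => hnc ⟨a, b, c, hcol, hac, h⟩

theorem not_headAt_of_arrow (hA : G.isAncestral) {a b : V} (h : G.arrow a b) :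
    ¬ G.headAt b a :=
  fun hba => hA.1 a b hba (.single h)

def tripleOK (G : MixedGraph V) (C : Set V) (a b c : V) : Prop :=
  (G.collider a b c → b ∈ C ∨ ∃ x ∈ C, G.anc b x) ∧ (¬ G.collider a b c → b ∉ C)

theorem tripleOK_comm {a b c : V} : G.tripleOK C a b c ↔ G.tripleOK C c b a := by
  simp only [tripleOK, collider, and_comm]

theorem tripleOK_of_headAt_iff {a b c c' : V} (h : G.headAt c b ↔ G.headAt c' b)
    (hc : G.tripleOK C a b c) : G.tripleOK C a b c' := by
  simpa only [tripleOK, collider, h] using hc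

theorem innerOK_iff_getD (d : V) :
    ∀ p : List V, G.innerOK C p ↔
      ∀ m, m + 2 < p.length → G.tripleOK C (p.getD m d) (p.getD (m + 1) d) (p.getD (m + 2) d)
  | [] | [_] | [_, _] => by simp [innerOK]
  | a :: b :: c :: r => by
    rw [innerOK, innerOK_iff_getD d (b :: c :: r)]
    constructor
    · rintro ⟨h0, h⟩ (_ | m) hm
      exacts [h0, h m (by simp at hm ⊢; omega)]
    · intro h
      exact ⟨h 0 (by simp), fun m hm => h (m + 1) (by simp at hm ⊢; omega)⟩

theorem mConnecting_iff_getD {x y : V} (p : List V) (d : V) :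
    G.mConnecting C x y p ↔
      p.Nodup ∧ 2 ≤ p.length ∧ p.getD 0 d = x ∧ p.getD (p.length - 1) d = y ∧
      (∀ m, m + 1 < p.length → G.adj (p.getD m d) (p.getD (m + 1) d)) ∧
      ∀ m, m + 2 < p.length →
        G.tripleOK C (p.getD m d) (p.getD (m + 1) d) (p.getD (m + 2) d) := by
  rw [mConnecting, isPath, List.Chain', List.isChain_iff_getD p d, innerOK_iff_getD d]
  rcases p with _ | ⟨a, p⟩
  · simp
  · simp [List.getLast?_eq_getElem?, List.getD_eq_getElem?_getD]
    grind

namespace mConnecting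
variable {x y : V} {p : List V}

theorem tripleOK_getD (hp : G.mConnecting C x y p) (d : V) {m : ℕ} (h0 : 0 < m)
    (hm : m + 1 < p.length) : G.tripleOK C (p.getD (m - 1) d) (p.getD m d) (p.getD (m + 1) d) := by
  obtain ⟨k, rfl⟩ : ∃ k, m = k + 1 := ⟨m - 1, by omega⟩
  exact ((mConnecting_iff_getD p d).1 hp).2.2.2.2.2 k (by omega)

theorem reverse (hp : G.mConnecting C x y p) : G.mConnecting C y x p.reverse := by
  rw [mConnecting_iff_getD p x] at hp
  obtain ⟨hnd, hlen, hx, hy, hadj, hok⟩ := hp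
  have hrev {m n : ℕ} (h : m + n + 1 = p.length) := p.getD_reverse_eq_getD x h
  rw [mConnecting_iff_getD p.reverse x, List.length_reverse]
  refine ⟨List.nodup_reverse.2 hnd, hlen, ?_, ?_, fun m hm => ?_, fun m hm => ?_⟩
  · rwa [hrev (n := p.length - 1) (by omega)]
  · rwa [hrev (n := 0) (by omega)]
  · rw [hrev (n := p.length - 2 - m + 1) (by omega), hrev (n := p.length - 2 - m) (by omega)]
    exact adj_symm (hadj _ (by omega))
  · rw [hrev (n := p.length - 3 - m + 2) (by omega), hrev (n := p.length - 3 - m + 1) (by omega),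
      hrev (n := p.length - 3 - m) (by omega)]
    exact tripleOK_comm.1 (hok _ (by omega))

theorem take_append_drop {d : V} (hp : G.mConnecting C x y p) {K L : ℕ} (hKL : K < L)
    (hL : L < p.length) (hadj : G.adj (p.getD K d) (p.getD L d))
    (hleft : 0 < K → G.tripleOK C (p.getD (K - 1) d) (p.getD K d) (p.getD L d))
    (hright : L + 1 < p.length → G.tripleOK C (p.getD K d) (p.getD L d) (p.getD (L + 1) d)) :
    G.mConnecting C x y (p.take (K + 1) ++ p.drop L) := by
  rw [mConnecting_iff_getD p d] at hp
  obtain ⟨hnd, hlen, hx, hy, hpadj, hok⟩ := hp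
  have hget := fun m => p.getD_take_append_drop d (m := m) hKL hL.le
  rw [mConnecting_iff_getD _ d, p.length_take_append_drop hKL hL.le]
  refine ⟨(p.take_append_drop_sublist hKL).nodup hnd, by omega, ?_, ?_, fun m hm => ?_,
    fun m hm => ?_⟩
  · rwa [hget, if_pos (Nat.zero_le _)]
  · rwa [hget, if_neg (by omega),
      show p.length + (K + 1) - L - 1 - (K + 1) + L = p.length - 1 by omega]
  · rw [hget, hget]
    rcases lt_trichotomy m K with h | rfl | h
    · rw [if_pos (by omega), if_pos (by omega)]
      exact hpadj m (by omega)
    · rw [if_pos le_rfl, if_neg (by omega), show m + 1 - (m + 1) + L = L by omega]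
      exact hadj
    · rw [if_neg (by omega), if_neg (by omega),
        show m + 1 - (K + 1) + L = m - (K + 1) + L + 1 by omega]
      exact hpadj _ (by omega)
  · rw [hget, hget, hget]
    rcases lt_trichotomy (m + 1) K with h | h | h
    · rw [if_pos (by omega), if_pos (by omega), if_pos (by omega)]
      exact hok m (by omega)
    · subst h
      rw [if_pos (by omega), if_pos le_rfl, if_neg (by omega),
        show m + 2 - (m + 1 + 1) + L = L by omega]
      exact hleft (by omega)
    · rcases Nat.lt_or_ge K m with h' | h'
      · rw [if_neg (by omega), if_neg (by omega), if_neg (by omega),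
          show m + 1 - (K + 1) + L = m - (K + 1) + L + 1 by omega,
          show m + 2 - (K + 1) + L = m - (K + 1) + L + 2 by omega]
        exact hok _ (by omega)
      · obtain rfl : m = K := by omega
        rw [if_pos le_rfl, if_neg (by omega), if_neg (by omega),
          show m + 1 - (m + 1) + L = L by omega, show m + 2 - (m + 1) + L = L + 1 by omega]
        exact hright (by omega)

end mConnecting

theorem mConnecting_triple {a b c : V} (hab : G.adj a b) (hbc : G.adj b c) (hac : a ≠ c)
    (hb : G.tripleOK C a b c) : G.mConnecting C a c [a, b, c] := by
  refine ⟨⟨?_, .cons_cons hab (List.isChain_pair.2 hbc)⟩, by simp, rfl, rfl, hb, trivial⟩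
  simp [ne_of_adj_s5 hab, ne_of_adj_s5 hbc, hac]

theorem mConnecting_quadruple {a b c e : V} (hab : G.adj a b) (hbc : G.adj b c)
    (hce : G.adj c e) (hac : a ≠ c) (hbe : b ≠ e) (hae : a ≠ e) (hb : G.tripleOK C a b c)
    (hc : G.tripleOK C b c e) : G.mConnecting C a e [a, b, c, e] := by
  refine ⟨⟨?_, .cons_cons hab (.cons_cons hbc (List.isChain_pair.2 hce))⟩, by simp, rfl, rfl,
    hb, hc, trivial⟩
  simp [ne_of_adj_s5 hab, ne_of_adj_s5 hbc, ne_of_adj_s5 hce, hac, hbe, hae]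

section toUG
variable {H : MixedGraph V} {x y : V} {p : List V}

theorem adj_toUG {a b : V} : H.toUG.adj a b ↔ H.adj a b := by
  simp [adj, toUG]

theorem tripleOK_toUG {a b c : V} : H.toUG.tripleOK C a b c ↔ b ∉ C := by
  simp [tripleOK, collider, headAt, toUG]

theorem mConnecting.toUG (hp : H.mConnecting C x y p) (d : V)
    (hC : ∀ m, 0 < m → m + 1 < p.length → p.getD m d ∉ C) : H.toUG.mConnecting C x y p := by
  rw [mConnecting_iff_getD p d] at hp ⊢
  obtain ⟨hnd, hlen, hx, hy, hadj, -⟩ := hp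
  exact ⟨hnd, hlen, hx, hy, fun m hm => adj_toUG.2 (hadj m hm),
    fun m hm => tripleOK_toUG.2 (hC (m + 1) (by omega) (by omega))⟩

theorem mConnecting.of_toUG (hp : H.toUG.mConnecting C x y p) (d : V)
    (hcol : ∀ m, m + 2 < p.length →
      ¬ H.collider (p.getD m d) (p.getD (m + 1) d) (p.getD (m + 2) d)) :
    H.mConnecting C x y p := by
  rw [mConnecting_iff_getD p d] at hp ⊢
  obtain ⟨hnd, hlen, hx, hy, hadj, hok⟩ := hp
  exact ⟨hnd, hlen, hx, hy, fun m hm => adj_toUG.1 (hadj m hm),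
    fun m hm => ⟨fun h => (hcol m hm h).elim, fun _ => tripleOK_toUG.1 (hok m hm)⟩⟩

end toUG

theorem arc_of_arcs_of_crossing_arrows (hA : G.isAncestral) {w a b c : V} (hwa : G.arc w a)
    (hbc : G.arc b c) (hac : G.arrow a c) (hbw : G.arrow b w) (hwc : G.adj w c) :
    G.arc w c := by
  rcases hwc with hwc | hwc | hcw | hwc
  · exact absurd (Or.inr (G.arc_symm w a hwa)) (hA.2 w c a hwc)
  · exact (hA.1 b c (Or.inr (G.arc_symm b c hbc)) (.tail (.single hbw) hwc)).elim
  · exact (hA.1 a w (Or.inr hwa) (.tail (.single hac) hcw)).elim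
  · exact hwc

theorem adj_of_arcs_of_crossing_arrows (hG : G.isMAG) {w a b c : V} (hwa : G.arc w a)
    (hab : G.arc a b) (hbc : G.arc b c) (hac : G.arrow a c) (hbw : G.arrow b w) (hwc : w ≠ c) :
    G.adj w c := by
  by_contra hn
  obtain ⟨D, -, -, hsep⟩ := hG.2 w c hwc hn
  suffices ∃ p, G.mConnecting D w c p from
    let ⟨p, hp⟩ := this; hsep ⟨w, c, p, rfl, rfl, hp⟩
  by_cases ha : a ∈ D
  · by_cases hb : b ∈ D
    · refine ⟨_, mConnecting_quadruple (adj_of_arc hwa) (adj_of_arc hab) (adj_of_arc hbc)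
        (ne_of_adj_s5 (adj_symm (adj_of_arrow hbw))) (ne_of_adj_s5 (adj_of_arrow hac)) hwc ?_ ?_⟩
      · exact ⟨fun _ => Or.inl ha, fun h => (h ⟨Or.inr hwa, Or.inr (G.arc_symm a b hab)⟩).elim⟩
      · exact ⟨fun _ => Or.inl hb, fun h => (h ⟨Or.inr hab, Or.inr (G.arc_symm b c hbc)⟩).elim⟩
    · exact ⟨_, mConnecting_triple (adj_symm (adj_of_arrow hbw)) (adj_of_arc hbc) hwc
        ⟨fun h => (not_headAt_of_arrow hG.1 hbw h.1).elim, fun _ => hb⟩⟩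
  · exact ⟨_, mConnecting_triple (adj_of_arc hwa) (adj_of_arrow hac) hwc
      ⟨fun h => (not_headAt_of_arrow hG.1 hac h.2).elim, fun _ => ha⟩⟩

/-- `w *→ a ↔ b ↔ c` with `a → c` and `a ∈ C`: skipping `b` turns `a` into a non-collider in `C`. -/
def shortcutObstruction (G : MixedGraph V) (C : Set V) (w a b c : V) : Prop :=
  a ∈ C ∧ G.headAt w a ∧ G.arc a b ∧ G.arc c b ∧ G.arrow a c

theorem shortcutObstruction_of_not_tripleOK (hA : G.isAncestral) {w a b c : V}
    (hwab : G.tripleOK C w a b) (habc : G.tripleOK C a b c) (hcol : G.collider a b c)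
    (hac : G.adj a c) (hwac : ¬ G.tripleOK C w a c) : G.shortcutObstruction C w a b c := by
  obtain ⟨hab, hcb⟩ := hcol
  by_cases hba : G.headAt b a
  · have hab : G.arc a b := hab.resolve_left fun h => not_headAt_of_arrow hA h hba
    by_cases hca : G.headAt c a
    · exact (hwac (tripleOK_of_headAt_iff (iff_of_true hba hca) hwab)).elim
    have haC : a ∈ C := by_contra fun haC => hwac ⟨fun h => (hca h.2).elim, fun _ => haC⟩
    have hwa : G.headAt w a := by_contra fun hwa => hwab.2 (fun h => hwa h.1) haC
    have hac : G.arrow a c := by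
      rcases hac with hac | hac | hca' | hac
      exacts [(hA.2 a c b hac hba).elim, hac, (hca (Or.inl hca')).elim,
        (hca (Or.inr (G.arc_symm a c hac))).elim]
    have hcb : G.arc c b := hcb.resolve_left fun hcb =>
      hA.1 a b (Or.inr (G.arc_symm a b hab)) ((Relation.ReflTransGen.single hac).tail hcb)
    exact ⟨haC, hwa, hab, hcb, hac⟩
  · have hab : G.arrow a b := hab.resolve_right fun h => hba (Or.inr (G.arc_symm a b h))
    have haC : a ∉ C := hwab.2 fun h => hba h.2
    refine (hwac ⟨fun _ => ?_, fun _ => haC⟩).elim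
    rcases habc.1 ⟨Or.inl hab, hcb⟩ with hb | ⟨z, hz, hbz⟩
    exacts [Or.inr ⟨b, hb, .single hab⟩, Or.inr ⟨z, hz, .head hab hbz⟩]

def isShortestMConnecting (G : MixedGraph V) (C : Set V) (x y : V) (p : List V) : Prop :=
  G.mConnecting C x y p ∧ ∀ q, G.mConnecting C x y q → p.length ≤ q.length

theorem exists_isShortestMConnecting {x y : V} (h : ∃ p, G.mConnecting C x y p) :
    ∃ p, G.isShortestMConnecting C x y p := by
  obtain ⟨p, hp, hmin⟩ := (measure List.length).wf.has_min {p | G.mConnecting C x y p} h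
  exact ⟨p, hp, fun q hq => not_lt.1 (hmin q hq)⟩

namespace isShortestMConnecting
variable {x y : V} {p : List V}

theorem reverse (hp : G.isShortestMConnecting C x y p) :
    G.isShortestMConnecting C y x p.reverse :=
  ⟨hp.1.reverse, fun q hq => by simpa using hp.2 q.reverse hq.reverse⟩

theorem false_of_shortcut {d : V} (hp : G.isShortestMConnecting C x y p) {K L : ℕ}
    (hKL : K + 1 < L) (hL : L < p.length) (hadj : G.adj (p.getD K d) (p.getD L d))
    (hleft : 0 < K → G.tripleOK C (p.getD (K - 1) d) (p.getD K d) (p.getD L d))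
    (hright : L + 1 < p.length → G.tripleOK C (p.getD K d) (p.getD L d) (p.getD (L + 1) d)) :
    False := by
  have := hp.2 _ (hp.1.take_append_drop (by omega) hL hadj hleft hright)
  rw [p.length_take_append_drop (by omega) hL.le] at this
  omega

theorem not_collider_of_toUG {H : MixedGraph V} (hnc : ¬ ∃ i j k, H.unshieldedCollider i j k)
    (hp : H.toUG.isShortestMConnecting C x y p) (d : V) {m : ℕ} (hm : m + 2 < p.length) :
    ¬ H.collider (p.getD m d) (p.getD (m + 1) d) (p.getD (m + 2) d) := by
  intro hcol
  have hadj := adj_of_collider hnc hcol (hp.1.1.1.getD_ne d (by omega) hm (by omega))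
  refine hp.false_of_shortcut (L := m + 2) (by omega) hm (adj_toUG.2 hadj) (fun h0 => ?_)
    (fun h3 => ?_) <;> rw [tripleOK_toUG]
  · exact tripleOK_toUG.1 (hp.1.tripleOK_getD d h0 (by omega))
  · exact tripleOK_toUG.1 (hp.1.tripleOK_getD d (m := m + 2) (by omega) h3)

theorem shortcutObstruction_of_collider (hA : G.isAncestral)
    (hp : G.isShortestMConnecting C x y p) (d : V) {K : ℕ} (hK : K + 2 < p.length)
    (hcol : G.collider (p.getD K d) (p.getD (K + 1) d) (p.getD (K + 2) d))
    (hadj : G.adj (p.getD K d) (p.getD (K + 2) d)) :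
    (∃ i, i + 1 = K ∧ G.shortcutObstruction C
      (p.getD i d) (p.getD (i + 1) d) (p.getD (i + 2) d) (p.getD (i + 3) d)) ∨
    (K + 3 < p.length ∧ G.shortcutObstruction C
      (p.getD (K + 3) d) (p.getD (K + 2) d) (p.getD (K + 1) d) (p.getD K d)) := by
  have hmid := hp.1.tripleOK_getD d (m := K + 1) (by omega) (by omega)
  rw [Nat.add_sub_cancel] at hmid
  by_contra h
  rw [not_or, not_exists, not_and] at h
  refine hp.false_of_shortcut (L := K + 2) (by omega) hK hadj (fun hK0 => ?_) (fun hK3 => ?_)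
  · obtain ⟨i, rfl⟩ : ∃ i, K = i + 1 := ⟨K - 1, by omega⟩
    by_contra hnew
    rw [Nat.add_sub_cancel] at hnew
    exact h.1 i ⟨rfl, shortcutObstruction_of_not_tripleOK hA
      (hp.1.tripleOK_getD d (m := i + 1) hK0 (by omega)) hmid hcol hadj hnew⟩
  · by_contra hnew
    refine h.2 hK3 (shortcutObstruction_of_not_tripleOK hA ?_ (tripleOK_comm.1 hmid)
      ⟨hcol.2, hcol.1⟩ (adj_symm hadj) (mt tripleOK_comm.1 hnew))
    exact tripleOK_comm.1 (hp.1.tripleOK_getD d (m := K + 2) (by omega) hK3)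

theorem not_shortcutObstruction_pair (hG : G.isMAG) (hp : G.isShortestMConnecting C x y p)
    (d : V) {i : ℕ} (hi : i + 3 < p.length)
    (h : G.shortcutObstruction C (p.getD i d) (p.getD (i + 1) d) (p.getD (i + 2) d)
      (p.getD (i + 3) d))
    (h' : G.shortcutObstruction C (p.getD (i + 3) d) (p.getD (i + 2) d) (p.getD (i + 1) d)
      (p.getD i d)) : False := by
  obtain ⟨-, -, hab, hcb, hac⟩ := h
  obtain ⟨-, -, -, hwa, hbw⟩ := h'
  have hwc := hp.1.1.1.getD_ne d (m := i) (m' := i + 3) (by omega) hi (by omega)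
  have hadj := adj_of_arcs_of_crossing_arrows hG hwa hab (G.arc_symm _ _ hcb) hac hbw hwc
  have harc := arc_of_arcs_of_crossing_arrows hG.1 hwa (G.arc_symm _ _ hcb) hac hbw hadj
  refine hp.false_of_shortcut (L := i + 3) (by omega) hi hadj (fun hi0 => ?_) (fun hi4 => ?_)
  · refine tripleOK_of_headAt_iff ?_ (hp.1.tripleOK_getD d hi0 (by omega))
    exact iff_of_true (Or.inr (G.arc_symm _ _ hwa)) (Or.inr (G.arc_symm _ _ harc))
  · refine tripleOK_comm.1 (tripleOK_of_headAt_iff ?_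
      (tripleOK_comm.1 (hp.1.tripleOK_getD d (m := i + 3) (by omega) hi4)))
    exact iff_of_true (Or.inr (G.arc_symm _ _ hcb)) (Or.inr harc)

theorem not_shortcutObstruction (hG : G.isMAG) (hnc : ¬ ∃ i j k, G.unshieldedCollider i j k)
    (hp : G.isShortestMConnecting C x y p) (d : V) (i : ℕ) (hi : i + 3 < p.length) :
    ¬ G.shortcutObstruction C (p.getD i d) (p.getD (i + 1) d) (p.getD (i + 2) d)
      (p.getD (i + 3) d) := by
  induction i using Nat.strong_induction_on with
  | _ i IH =>
  intro h
  have hcol : G.collider (p.getD i d) (p.getD (i + 1) d) (p.getD (i + 2) d) :=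
    ⟨h.2.1, Or.inr (G.arc_symm _ _ h.2.2.1)⟩
  have hadj := adj_of_collider hnc hcol (hp.1.1.1.getD_ne d (by omega) (by omega) (by omega))
  rcases hp.shortcutObstruction_of_collider hG.1 d (by omega) hcol hadj with
    ⟨j, rfl, h'⟩ | ⟨-, h'⟩
  · exact IH j (by omega) (by omega) h'
  · exact hp.not_shortcutObstruction_pair hG d hi h h'

theorem getD_not_mem (hG : G.isMAG) (hnc : ¬ ∃ i j k, G.unshieldedCollider i j k)
    (hp : G.isShortestMConnecting C x y p) (d : V) {m : ℕ} (h0 : 0 < m)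
    (hm : m + 1 < p.length) : p.getD m d ∉ C := by
  intro hmC
  have hok := hp.1.tripleOK_getD d h0 hm
  obtain ⟨k, rfl⟩ : ∃ k, m = k + 1 := ⟨m - 1, by omega⟩
  rw [Nat.add_sub_cancel] at hok
  have hcol : G.collider (p.getD k d) (p.getD (k + 1) d) (p.getD (k + 2) d) :=
    by_contra fun h => hok.2 h hmC
  have hadj := adj_of_collider hnc hcol (hp.1.1.1.getD_ne d (by omega) (by omega) (by omega))
  rcases hp.shortcutObstruction_of_collider hG.1 d (by omega) hcol hadj with
    ⟨j, rfl, h⟩ | ⟨hk, h⟩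
  · exact hp.not_shortcutObstruction hG hnc d j (by omega) h
  · refine hp.reverse.not_shortcutObstruction hG hnc d (p.length - 4 - k) (by simp; omega) ?_
    rwa [p.getD_reverse_eq_getD d (n := k + 3) (by omega),
      p.getD_reverse_eq_getD d (n := k + 2) (by omega),
      p.getD_reverse_eq_getD d (n := k + 1) (by omega),
      p.getD_reverse_eq_getD d (n := k) (by omega)]

end isShortestMConnecting

theorem exists_mConnecting_toUG_iff {H : MixedGraph V} {x y : V} (hH : H.isMAG)
    (hnc : ¬ ∃ i j k, H.unshieldedCollider i j k) :
    (∃ p, H.toUG.mConnecting C x y p) ↔ ∃ p, H.mConnecting C x y p := by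
  constructor <;> intro h <;> obtain ⟨p, hp⟩ := exists_isShortestMConnecting h
  · exact ⟨p, hp.1.of_toUG x fun m hm => hp.not_collider_of_toUG hnc x hm⟩
  · exact ⟨p, hp.1.toUG x fun m h0 hm => hp.getD_not_mem hH hnc x h0 hm⟩

end MixedGraph

theorem mag_no_unshielded_collider_equiv_toUG_general {V : Type*}
    (H : MixedGraph V) (hH : H.isMAG)
    (hnc : ¬ ∃ i j k, H.unshieldedCollider i j k) :
    H.markovEquiv H.toUG := by
  intro A B C _ _ _
  have hex := fun x y => MixedGraph.exists_mConnecting_toUG_iff (C := C) (x := x) (y := y) hH hnc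
  refine not_congr ⟨fun ⟨i, j, p, hi, hj, hp⟩ => ?_, fun ⟨i, j, p, hi, hj, hp⟩ => ?_⟩
  · obtain ⟨q, hq⟩ := (hex i j).2 ⟨p, hp⟩
    exact ⟨i, j, q, hi, hj, hq⟩
  · obtain ⟨q, hq⟩ := (hex i j).1 ⟨p, hp⟩
    exact ⟨i, j, q, hi, hj, hq⟩

/-- A maximal ancestral graph with no unshielded collider V-configuration is
Markov equivalent to the undirected graph obtained by removing all arrowheads. -/
theorem mag_no_unshielded_collider_equiv_toUG {V : Type*} [Fintype V]
    (H : MixedGraph V) (hH : H.isMAG)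
    (hnc : ¬ ∃ i j k, H.unshieldedCollider i j k) :
    H.markovEquiv H.toUG :=
  mag_no_unshielded_collider_equiv_toUG_general H hH hnc
end
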